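/- arXiv:2103.08847 — 2 statements merged into one kernel-verified Lean document; each statement's English description precedes it below -/
import Mathlib

section
/- Let Φ(t) = eᵗ − 1 and let φ(t) = t·log(e²/t) for 0 < t ≤ 1. There is an absolute constant C ≥ 1 such that for every measurable function y on (0,1), C⁻¹ ‖y‖_{L_Φ(0,1)} ≤ sup_{0<t≤1} (1/φ(t)) ∫_0^t μ(s,y) ds ≤ C ‖y‖_{L_Φ(0,1)}, where both sides take values in [0,∞]. In other words, the Marcinkiewicz space M_φ(0,1) coincides with the Orlicz space L_Φ(0,1) with equivalent norms. -/
/-!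
Write `ν` for Lebesgue measure on `(0,1)`. If `∫ (exp(|y|/l) - 1) dν ≤ 1`, Chebyshev gives
`ν{|y| > l log(1 + 1/s)} ≤ s`, hence `μ(s,y) ≤ l (1 - log s)`, and `φ` is exactly the primitive
`∫_0^t (1 - log s) ds`; so the Marcinkiewicz norm is at most the Orlicz norm.
Conversely, if the Marcinkiewicz norm is at most `K`, then `t μ(t,y) ≤ ∫_0^t μ(s,y) ds ≤ K φ(t)`
gives `μ(t,y) ≤ K (2 - log t)`, i.e. the exponential tail `ν{|y| > a} ≤ 2e² e^{-a/K}`. By the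
layer-cake formula, `∫ (exp(|y|/16K) - 1) dν ≤ 2e² ∫_0^∞ (1+u)^{-16} du = 2e²/15 ≤ 1`, so the
Orlicz norm is at most `16 K`.
-/

open MeasureTheory ENNReal Set

/-- The decreasing rearrangement `μ(t, f)`. -/
noncomputable def mu {X : Type*} [MeasurableSpace X] (ν : Measure X) (f : X → ℝ) (t : ℝ) : ℝ≥0∞ :=
  sInf (ENNReal.ofReal '' {s : ℝ | 0 ≤ s ∧ ν {u | s < |f u|} ≤ ENNReal.ofReal t})

/-- Luxemburg norm for `Φ(t) = eᵗ - 1` on `(0,1)`: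
`‖y‖ = inf {λ > 0 : ∫_0^1 (exp(|y(s)|/λ) - 1) ds ≤ 1}`, with `inf ∅ = ∞`. -/
noncomputable def expOrliczNorm (y : ℝ → ℝ) : ℝ≥0∞ :=
  sInf (ENNReal.ofReal ''
    {l : ℝ | 0 < l ∧ (∫⁻ s in Ioo (0:ℝ) 1, ENNReal.ofReal (Real.exp (|y s| / l) - 1)) ≤ 1})

noncomputable def marcinkiewiczPhi (t : ℝ) : ℝ := t * Real.log (Real.exp 2 / t)

noncomputable def marcinkiewiczNorm (y : ℝ → ℝ) : ℝ≥0∞ :=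
  ⨆ (t : ℝ) (_ : 0 < t) (_ : t ≤ 1),
    (∫⁻ s in Ioc (0:ℝ) t, mu (volume.restrict (Ioo 0 1)) y s) /
      ENNReal.ofReal (marcinkiewiczPhi t)

theorem marcinkiewiczPhi_eq {t : ℝ} (ht : 0 < t) : marcinkiewiczPhi t = t * (2 - Real.log t) := by
  rw [marcinkiewiczPhi, Real.log_div (Real.exp_ne_zero 2) ht.ne', Real.log_exp]

theorem marcinkiewiczPhi_pos {t : ℝ} (ht0 : 0 < t) (ht1 : t ≤ 1) : 0 < marcinkiewiczPhi t := by
  rw [marcinkiewiczPhi_eq ht0]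
  exact mul_pos ht0 (by linarith [Real.log_nonpos ht0.le ht1])

theorem lintegral_mu_le_marcinkiewiczNorm_mul {y : ℝ → ℝ} {t : ℝ} (ht0 : 0 < t) (ht1 : t ≤ 1) :
    ∫⁻ s in Ioc 0 t, mu (volume.restrict (Ioo 0 1)) y s ≤
      marcinkiewiczNorm y * ENNReal.ofReal (marcinkiewiczPhi t) := by
  rw [← ENNReal.div_le_iff (ENNReal.ofReal_pos.2 (marcinkiewiczPhi_pos ht0 ht1)).ne'
    ENNReal.ofReal_ne_top]
  exact le_iSup₂_of_le t ht0 (le_iSup (fun _ : t ≤ 1 => _) ht1)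

section Rearrangement

variable {X : Type*} [MeasurableSpace X] {ν : Measure X} {f : X → ℝ}

theorem mu_antitone : Antitone (mu ν f) := fun _ _ h =>
  sInf_le_sInf (image_mono fun _ hs => ⟨hs.1, hs.2.trans (ENNReal.ofReal_le_ofReal h)⟩)

theorem mu_le_ofReal {t a : ℝ} (ha : 0 ≤ a) (h : ν {u | a < |f u|} ≤ ENNReal.ofReal t) :
    mu ν f t ≤ ENNReal.ofReal a :=
  sInf_le ⟨a, ⟨ha, h⟩, rfl⟩

theorem measure_lt_abs_le_of_mu_lt {t a : ℝ} (h : mu ν f t < ENNReal.ofReal a) :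
    ν {u | a < |f u|} ≤ ENNReal.ofReal t := by
  obtain ⟨_, ⟨s, ⟨-, hs⟩, rfl⟩, hsa⟩ := sInf_lt_iff.1 h
  have hsa : s < a := by
    contrapose! hsa
    exact ENNReal.ofReal_le_ofReal hsa
  exact (measure_mono fun u hu => hsa.trans hu).trans hs

theorem ofReal_mul_mu_le_lintegral_mu (t : ℝ) :
    ENNReal.ofReal t * mu ν f t ≤ ∫⁻ s in Ioc 0 t, mu ν f s :=
  calc ENNReal.ofReal t * mu ν f t = ∫⁻ _ in Ioc 0 t, mu ν f t := by
        rw [setLIntegral_const, Real.volume_Ioc, sub_zero, mul_comm]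
    _ ≤ ∫⁻ s in Ioc 0 t, mu ν f s :=
        setLIntegral_mono mu_antitone.measurable fun _ hs => mu_antitone hs.2

end Rearrangement

theorem lintegral_ofReal_one_sub_log {t : ℝ} (ht0 : 0 < t) (ht1 : t ≤ 1) :
    ∫⁻ s in Ioc 0 t, ENNReal.ofReal (1 - Real.log s) = ENNReal.ofReal (marcinkiewiczPhi t) := by
  have hlog : IntegrableOn Real.log (Ioc 0 t) :=
    (intervalIntegrable_iff_integrableOn_Ioc_of_le ht0.le).1
      intervalIntegral.intervalIntegrable_log'
  have hnonneg : ∀ s ∈ Ioc 0 t, 0 ≤ 1 - Real.log s := fun s hs => by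
    linarith [Real.log_nonpos hs.1.le (hs.2.trans ht1)]
  have hint : IntegrableOn (fun s => 1 - Real.log s) (Ioc 0 t) := (integrable_const 1).sub hlog
  rw [← ofReal_integral_eq_lintegral_ofReal hint
      (ae_restrict_of_forall_mem measurableSet_Ioc hnonneg),
    integral_sub (integrable_const 1) hlog, setIntegral_const,
    ← intervalIntegral.integral_of_le ht0.le, integral_log_from_zero, marcinkiewiczPhi_eq ht0]
  congr 1
  simp [ht0.le]
  ring

theorem lintegral_Ioi_one_add_rpow_neg {p : ℝ} (hp : 1 < p) :
    ∫⁻ u in Ioi 0, ENNReal.ofReal ((1 + u) ^ (-p)) = ENNReal.ofReal (1 / (p - 1)) := by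
  have hshift := (measurePreserving_add_left volume (1 : ℝ)).setLIntegral_comp_preimage_emb
    (measurableEmbedding_addLeft 1) (fun v => ENNReal.ofReal (v ^ (-p))) (Ioi 1)
  rw [preimage_const_add_Ioi, sub_self] at hshift
  rw [hshift, ← ofReal_integral_eq_lintegral_ofReal
    (integrableOn_Ioi_rpow_of_lt (by linarith) one_pos)
    (ae_restrict_of_forall_mem measurableSet_Ioi fun v hv =>
      Real.rpow_nonneg (zero_le_one.trans hv.le) _),
    integral_Ioi_rpow_of_lt (by linarith) one_pos, Real.one_rpow, ← neg_sub, neg_add_eq_sub,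
    div_neg, neg_div]

section Orlicz

variable {X : Type*} [MeasurableSpace X] {ν : Measure X} {y : X → ℝ}

theorem measure_lt_abs_le_of_lintegral_exp_le_one (hy : AEMeasurable y ν) {l : ℝ} (hl : 0 < l)
    (hint : ∫⁻ u, ENNReal.ofReal (Real.exp (|y u| / l) - 1) ∂ν ≤ 1) {s : ℝ} (hs : 0 < s) :
    ν {u | l * Real.log (1 + 1 / s) < |y u|} ≤ ENNReal.ofReal s := by
  have hsub : {u | l * Real.log (1 + 1 / s) < |y u|} ⊆
      {u | ENNReal.ofReal (1 / s) ≤ ENNReal.ofReal (Real.exp (|y u| / l) - 1)} := by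
    intro u hu
    refine ENNReal.ofReal_le_ofReal ?_
    have := Real.exp_lt_exp.2 ((lt_div_iff₀' hl).2 hu)
    rw [Real.exp_log (by positivity)] at this
    linarith
  calc ν _ ≤ (∫⁻ u, ENNReal.ofReal (Real.exp (|y u| / l) - 1) ∂ν) / ENNReal.ofReal (1 / s) :=
        (measure_mono hsub).trans (meas_ge_le_lintegral_div (by fun_prop)
          (by simpa using hs) ENNReal.ofReal_ne_top)
    _ ≤ 1 / ENNReal.ofReal (1 / s) := by gcongr
    _ = ENNReal.ofReal s := by
        rw [one_div, one_div, ENNReal.ofReal_inv_of_pos hs, inv_inv]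

theorem mu_le_of_lintegral_exp_le_one (hy : AEMeasurable y ν) {l : ℝ} (hl : 0 < l)
    (hint : ∫⁻ u, ENNReal.ofReal (Real.exp (|y u| / l) - 1) ∂ν ≤ 1) {s : ℝ} (hs0 : 0 < s)
    (hs1 : s ≤ 1) : mu ν y s ≤ ENNReal.ofReal (l * (1 - Real.log s)) := by
  have hle : 1 + 1 / s ≤ Real.exp 1 / s := by
    rw [le_div_iff₀ hs0, add_mul, one_div_mul_cancel hs0.ne']
    linarith [Real.add_one_le_exp 1]
  have hlog : Real.log (1 + 1 / s) ≤ 1 - Real.log s :=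
    calc Real.log (1 + 1 / s) ≤ Real.log (Real.exp 1 / s) := Real.log_le_log (by positivity) hle
      _ = 1 - Real.log s := by rw [Real.log_div (Real.exp_ne_zero 1) hs0.ne', Real.log_exp]
  have hpos : 0 ≤ 1 - Real.log s := by linarith [Real.log_nonpos hs0.le hs1]
  refine mu_le_ofReal (mul_nonneg hl.le hpos) ((measure_mono fun u hu => ?_).trans
    (measure_lt_abs_le_of_lintegral_exp_le_one hy hl hint hs0))
  exact (mul_le_mul_of_nonneg_left hlog hl.le).trans_lt hu

theorem lintegral_mu_le_of_lintegral_exp_le_one (hy : AEMeasurable y ν) {l : ℝ} (hl : 0 < l)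
    (hint : ∫⁻ u, ENNReal.ofReal (Real.exp (|y u| / l) - 1) ∂ν ≤ 1) {t : ℝ} (ht0 : 0 < t)
    (ht1 : t ≤ 1) :
    ∫⁻ s in Ioc 0 t, mu ν y s ≤ ENNReal.ofReal l * ENNReal.ofReal (marcinkiewiczPhi t) :=
  calc ∫⁻ s in Ioc 0 t, mu ν y s
      ≤ ∫⁻ s in Ioc 0 t, ENNReal.ofReal l * ENNReal.ofReal (1 - Real.log s) :=
        setLIntegral_mono (by fun_prop) fun s hs =>
          (mu_le_of_lintegral_exp_le_one hy hl hint hs.1 (hs.2.trans ht1)).trans_eq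
            (ENNReal.ofReal_mul hl.le)
    _ = ENNReal.ofReal l * ENNReal.ofReal (marcinkiewiczPhi t) := by
        rw [lintegral_const_mul _ (by fun_prop), lintegral_ofReal_one_sub_log ht0 ht1]

end Orlicz

theorem marcinkiewiczNorm_le_expOrliczNorm {y : ℝ → ℝ} (hy : Measurable y) :
    marcinkiewiczNorm y ≤ expOrliczNorm y := by
  refine le_sInf ?_
  rintro _ ⟨l, ⟨hl, hint⟩, rfl⟩
  refine iSup₂_le fun t ht0 => iSup_le fun ht1 => ?_
  rw [ENNReal.div_le_iff (ENNReal.ofReal_pos.2 (marcinkiewiczPhi_pos ht0 ht1)).ne'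
    ENNReal.ofReal_ne_top]
  exact lintegral_mu_le_of_lintegral_exp_le_one hy.aemeasurable hl hint ht0 ht1

section Marcinkiewicz

variable {X : Type*} [MeasurableSpace X] {ν : Measure X} {y : X → ℝ}

theorem mu_le_of_lintegral_mu_le {K t : ℝ} (hK : 0 ≤ K) (ht : 0 < t)
    (h : ∫⁻ s in Ioc 0 t, mu ν y s ≤ ENNReal.ofReal K * ENNReal.ofReal (marcinkiewiczPhi t)) :
    mu ν y t ≤ ENNReal.ofReal (K * (2 - Real.log t)) := by
  have := (ofReal_mul_mu_le_lintegral_mu t).trans h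
  rw [marcinkiewiczPhi_eq ht, ENNReal.ofReal_mul ht.le, mul_left_comm,
    ← ENNReal.ofReal_mul hK] at this
  exact (ENNReal.mul_le_mul_iff_right (by simpa using ht) ENNReal.ofReal_ne_top).1 this

theorem measure_lt_abs_le_of_forall_mu_le (hν : ν univ ≤ 1) {K : ℝ} (hK : 0 < K)
    (hmu : ∀ t, 0 < t → t ≤ 1 → mu ν y t ≤ ENNReal.ofReal (K * (2 - Real.log t))) (a : ℝ) :
    ν {u | a < |y u|} ≤ ENNReal.ofReal (2 * Real.exp (2 - a / K)) := by
  -- The factor 2 makes `μ(t) < a` strict below, so no limit `t ↓ e^{2 - a/K}` is needed.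
  set t := 2 * Real.exp (2 - a / K)
  have ht0 : 0 < t := by positivity
  rcases le_or_gt 1 t with ht1 | ht1
  · exact (measure_mono (subset_univ _)).trans (hν.trans (ENNReal.one_le_ofReal.2 ht1))
  have hlog : Real.log t = Real.log 2 + 2 - a / K := by
    rw [Real.log_mul two_ne_zero (Real.exp_ne_zero _), Real.log_exp]
    ring
  have ha : 0 < a := by
    have := Real.log_neg ht0 ht1
    have := (lt_div_iff₀ hK).1 (show 2 < a / K by linarith [Real.log_pos one_lt_two])
    linarith
  refine measure_lt_abs_le_of_mu_lt ((hmu t ht0 ht1.le).trans_lt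
    ((ENNReal.ofReal_lt_ofReal_iff ha).2 ?_))
  rw [hlog]
  have : K * (2 - (Real.log 2 + 2 - a / K)) = a - K * Real.log 2 := by field_simp; ring
  rw [this]
  linarith [mul_pos hK (Real.log_pos one_lt_two)]

theorem lintegral_exp_le_one_of_forall_mu_le (hy : AEMeasurable y ν) (hν : ν univ ≤ 1) {K : ℝ}
    (hK : 0 < K)
    (hmu : ∀ t, 0 < t → t ≤ 1 → mu ν y t ≤ ENNReal.ofReal (K * (2 - Real.log t))) :
    ∫⁻ u, ENNReal.ofReal (Real.exp (|y u| / (16 * K)) - 1) ∂ν ≤ 1 := by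
  have hnonneg : 0 ≤ᵐ[ν] fun u => Real.exp (|y u| / (16 * K)) - 1 :=
    ae_of_all _ fun u => by simp only [Pi.zero_apply, sub_nonneg, Real.one_le_exp_iff]; positivity
  have hlevel : ∀ v : ℝ, 0 < v → {u | v < Real.exp (|y u| / (16 * K)) - 1} =
      {u | 16 * K * Real.log (1 + v) < |y u|} := fun v hv => by
    ext u
    rw [mem_ofPred_eq, mem_ofPred_eq, ← lt_div_iff₀' (by positivity),
      Real.log_lt_iff_lt_exp (by linarith), lt_sub_iff_add_lt']
  calc ∫⁻ u, ENNReal.ofReal (Real.exp (|y u| / (16 * K)) - 1) ∂ν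
      = ∫⁻ v in Ioi 0, ν {u | v < Real.exp (|y u| / (16 * K)) - 1} :=
        lintegral_eq_lintegral_meas_lt ν hnonneg (by fun_prop)
    _ ≤ ∫⁻ v in Ioi 0,
          ENNReal.ofReal (2 * Real.exp 2) * ENNReal.ofReal ((1 + v) ^ (-16 : ℝ)) := by
        refine setLIntegral_mono (by fun_prop) fun v hv => ?_
        rw [hlevel v hv, ← ENNReal.ofReal_mul (by positivity)]
        refine (measure_lt_abs_le_of_forall_mu_le hν hK hmu _).trans_eq ?_
        rw [Real.rpow_def_of_pos (by linarith [mem_Ioi.1 hv]), mul_assoc 2, ← Real.exp_add]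
        congr 3
        field_simp
        ring
    _ = ENNReal.ofReal (2 * Real.exp 2) * ENNReal.ofReal (1 / 15) := by
        rw [lintegral_const_mul _ (by fun_prop), lintegral_Ioi_one_add_rpow_neg (by norm_num)]
        norm_num
    _ ≤ 1 := by
        have he : Real.exp 2 < 7.5 := by
          rw [show (2 : ℝ) = 1 + 1 by norm_num, Real.exp_add]
          nlinarith [Real.exp_one_lt_d9, Real.exp_pos 1]
        rw [← ENNReal.ofReal_mul (by positivity), ENNReal.ofReal_le_one]
        linarith

end Marcinkiewicz

theorem expOrliczNorm_le_of_marcinkiewiczNorm_le {y : ℝ → ℝ} (hy : Measurable y) {K : ℝ}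
    (hK : 0 < K) (h : marcinkiewiczNorm y ≤ ENNReal.ofReal K) :
    expOrliczNorm y ≤ ENNReal.ofReal (16 * K) := by
  have hν : volume.restrict (Ioo (0 : ℝ) 1) univ ≤ 1 := by simp
  have hmu (t : ℝ) (ht0 : 0 < t) (ht1 : t ≤ 1) :
      mu (volume.restrict (Ioo 0 1)) y t ≤ ENNReal.ofReal (K * (2 - Real.log t)) :=
    mu_le_of_lintegral_mu_le hK.le ht0
      ((lintegral_mu_le_marcinkiewiczNorm_mul ht0 ht1).trans (by gcongr))
  exact sInf_le ⟨16 * K, ⟨by positivity,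
    lintegral_exp_le_one_of_forall_mu_le hy.aemeasurable hν hK hmu⟩, rfl⟩

theorem inv_mul_expOrliczNorm_le_marcinkiewiczNorm {y : ℝ → ℝ} (hy : Measurable y) :
    16⁻¹ * expOrliczNorm y ≤ marcinkiewiczNorm y := by
  refine ENNReal.le_of_forall_pos_le_add fun ε hε hM => ?_
  set K := (marcinkiewiczNorm y).toReal + ε
  have hMK : marcinkiewiczNorm y + ε = ENNReal.ofReal K := by
    rw [ENNReal.ofReal_add ENNReal.toReal_nonneg ε.coe_nonneg, ENNReal.ofReal_toReal hM.ne,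
      ENNReal.ofReal_coe_nnreal]
  rw [hMK]
  calc 16⁻¹ * expOrliczNorm y ≤ 16⁻¹ * ENNReal.ofReal (16 * K) := by
        gcongr
        exact expOrliczNorm_le_of_marcinkiewiczNorm_le hy (by positivity) (hMK ▸ le_self_add)
    _ = ENNReal.ofReal K := by
        rw [ENNReal.ofReal_mul (by norm_num), ← mul_assoc, ENNReal.ofReal_ofNat,
          ENNReal.inv_mul_cancel (by norm_num) (by norm_num), one_mul]

/-- The Marcinkiewicz space `M_φ(0,1)` with `φ(t) = t log(e²/t)` coincides with the Orlicz
space `L_Φ(0,1)`, `Φ(t) = eᵗ - 1`: there is `C ≥ 1` such that for every measurable `y` on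
`(0,1)`, `C⁻¹ ‖y‖_{L_Φ} ≤ sup_{0 < t ≤ 1} (1/φ(t)) ∫_0^t μ(s,y) ds ≤ C ‖y‖_{L_Φ}`. -/
theorem stmt_6 :
    ∃ C : ℝ≥0∞, 1 ≤ C ∧ C ≠ ⊤ ∧ ∀ y : ℝ → ℝ, Measurable y →
      C⁻¹ * expOrliczNorm y ≤
        (⨆ (t : ℝ) (_ : 0 < t) (_ : t ≤ 1),
          (∫⁻ s in Ioc (0:ℝ) t, mu (volume.restrict (Ioo 0 1)) y s) /
            ENNReal.ofReal (t * Real.log (Real.exp 2 / t))) ∧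
      (⨆ (t : ℝ) (_ : 0 < t) (_ : t ≤ 1),
          (∫⁻ s in Ioc (0:ℝ) t, mu (volume.restrict (Ioo 0 1)) y s) /
            ENNReal.ofReal (t * Real.log (Real.exp 2 / t))) ≤
        C * expOrliczNorm y :=
  ⟨16, by norm_num, by norm_num, fun _ hy =>
    ⟨inv_mul_expOrliczNorm_le_marcinkiewiczNorm hy,
      (marcinkiewiczNorm_le_expOrliczNorm hy).trans
        (le_mul_of_one_le_left zero_le (by norm_num))⟩⟩
end

section
/- Let 1 ≤ q < ∞ and let Φ be an Orlicz function that is q-concave, i.e. t ↦ Φ(t^{1/q}) is concave on [0,∞). Then there exists a constant C (depending only on Φ) such that for every measurable x : (0,∞) → ℝ, ‖C*x‖_Φ ≤ C ‖x‖_Φ, where (C*x)(t) = ∫_t^∞ x(s)/s ds; that is, the dual Cesàro operator C* is bounded on the Orlicz space L_Φ(0,∞). -/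
open MeasureTheory ENNReal Set

/-- An Orlicz function: continuous, convex and increasing on `[0,∞)`, with `Φ(0) = 0` and
`Φ(t) → ∞` as `t → ∞`. -/
def IsOrliczFunction (Φ : ℝ → ℝ) : Prop :=
  Continuous Φ ∧ ConvexOn ℝ (Ici 0) Φ ∧ MonotoneOn Φ (Ici 0) ∧ Φ 0 = 0 ∧
    Filter.Tendsto Φ Filter.atTop Filter.atTop

/-- The Luxemburg norm `‖x‖_Φ = inf {λ > 0 : ∫_0^∞ Φ(|x(s)|/λ) ds ≤ 1}` on `(0,∞)`,
with `inf ∅ = ∞`. -/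
noncomputable def orliczNorm (Φ : ℝ → ℝ) (x : ℝ → ℝ) : ℝ≥0∞ :=
  sInf (ENNReal.ofReal ''
    {l : ℝ | 0 < l ∧ (∫⁻ s in Ioi (0:ℝ), ENNReal.ofReal (Φ (|x s| / l))) ≤ 1})

/-!
Substituting `s = t v^(-q)` writes `C*x(t) = q ∫_0^1 x(t v^(-q)) v⁻¹ dv`, an average over the
probability space `(0,1)`. Jensen's inequality and the `q`-concavity bound `Φ(a u^(1/q)) ≤ u Φ(a)`
for `u ≥ 1` give `Φ(|C*x(t)|/(q l)) ≤ ∫_0^1 v^(-q) Φ(|x(t v^(-q))|/l) dv`, and after exchanging the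
integrals and rescaling `t` the right side integrates to `∫_0^∞ Φ(|x|/l)`. Hence
`‖C*x‖_Φ ≤ q ‖x‖_Φ`.
-/

lemma ConcaveOn.apply_mul_le_of_one_le {g : ℝ → ℝ} (hg : ConcaveOn ℝ (Ici 0) g) (hg0 : 0 ≤ g 0)
    {s u : ℝ} (hs : 0 ≤ s) (hu : 1 ≤ u) : g (u * s) ≤ u * g s := by
  have hu0 : 0 < u := one_pos.trans_le hu
  have h := hg.2 (mem_Ici.2 (by positivity : 0 ≤ u * s)) (mem_Ici.2 le_rfl) (inv_nonneg.2 hu0.le)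
    (sub_nonneg.2 (inv_le_one_of_one_le₀ hu)) (add_sub_cancel _ _)
  simp only [smul_eq_mul, mul_zero, add_zero, inv_mul_cancel_left₀ hu0.ne'] at h
  have hg0' : 0 ≤ (1 - u⁻¹) * g 0 := mul_nonneg (sub_nonneg.2 (inv_le_one_of_one_le₀ hu)) hg0
  calc g (u * s) = u * (u⁻¹ * g (u * s)) := by field_simp
    _ ≤ u * g s := by gcongr; linarith

lemma apply_mul_rpow_one_div_le {q : ℝ} (hq : 0 < q) {Φ : ℝ → ℝ}
    (hconc : ConcaveOn ℝ (Ici 0) (fun t : ℝ => Φ (t ^ (1/q)))) (hΦ0 : Φ 0 = 0)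
    {a u : ℝ} (ha : 0 ≤ a) (hu : 1 ≤ u) : Φ (a * u ^ (1/q)) ≤ u * Φ a := by
  have key := hconc.apply_mul_le_of_one_le (by simp [hq.ne', hΦ0]) (Real.rpow_nonneg ha q) hu
  simpa only [one_div, Real.mul_rpow (zero_le_one.trans hu) (Real.rpow_nonneg ha q),
    Real.rpow_rpow_inv ha hq.ne', mul_comm] using key

lemma integral_Ioi_one_eq_integral_Ioo_rpow_neg (f : ℝ → ℝ) {q : ℝ} (hq : 0 < q) :
    ∫ u in Ioi 1, f u = ∫ v in Ioo 0 1, q * v ^ (-q - 1) * f (v ^ (-q)) := by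
  have h := integral_comp_rpow_Ioi ((Ioi 1).indicator f) (neg_ne_zero.2 hq.ne')
  rw [abs_neg, abs_of_pos hq, setIntegral_indicator measurableSet_Ioi, Ioi_inter_Ioi,
    max_eq_right zero_le_one] at h
  rw [← h, ← inter_eq_right.2 (Ioo_subset_Ioi_self : Ioo (0:ℝ) 1 ⊆ Ioi 0),
    ← setIntegral_indicator measurableSet_Ioo]
  refine setIntegral_congr_fun measurableSet_Ioi fun v (hv : 0 < v) => ?_
  have hmem : v ^ (-q) ∈ Ioi 1 ↔ v ∈ Ioo 0 1 := by
    simp [Real.one_lt_rpow_iff_of_pos hv, hv, hq, hq.not_gt]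
  by_cases hv1 : v ∈ Ioo 0 1
  · rw [indicator_of_mem (hmem.2 hv1), indicator_of_mem hv1, smul_eq_mul]
  · rw [indicator_of_notMem (mt hmem.1 hv1), indicator_of_notMem hv1, smul_zero]

lemma integral_Ioi_div_eq_integral_Ioo (x : ℝ → ℝ) {q t : ℝ} (hq : 0 < q) (ht : 0 < t) :
    ∫ s in Ioi t, x s / s = q * ∫ v in Ioo 0 1, x (t * v ^ (-q)) / v := by
  have hscale : ∫ s in Ioi t, x s / s = ∫ u in Ioi 1, x (t * u) / u := by
    rw [← mul_one t, ← integral_comp_mul_left_Ioi' _ _ ht, smul_eq_mul, ← integral_const_mul,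
      mul_one]
    refine setIntegral_congr_fun measurableSet_Ioi fun u _ => ?_
    field_simp
  rw [hscale, integral_Ioi_one_eq_integral_Ioo_rpow_neg _ hq, ← integral_const_mul]
  refine setIntegral_congr_fun measurableSet_Ioo fun v hv => ?_
  rw [Real.rpow_sub_one hv.1.ne']
  have : 0 < v ^ (-q) := Real.rpow_pos_of_pos hv.1 _
  field_simp

lemma ofReal_apply_abs_integral_le_lintegral {α : Type*} [MeasurableSpace α] {μ : Measure α}
    [IsProbabilityMeasure μ] {Φ : ℝ → ℝ} (hcont : Continuous Φ) (hconv : ConvexOn ℝ (Ici 0) Φ)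
    (hmono : MonotoneOn Φ (Ici 0)) (hΦ0 : Φ 0 = 0) {g : α → ℝ} (hg : AEStronglyMeasurable g μ) :
    ENNReal.ofReal (Φ |∫ a, g a ∂μ|) ≤ ∫⁻ a, ENNReal.ofReal (Φ |g a|) ∂μ := by
  by_cases hgi : Integrable g μ
  swap
  · rw [integral_undef hgi, abs_zero, hΦ0, ENNReal.ofReal_zero]
    exact zero_le
  have hnonneg : 0 ≤ᵐ[μ] fun a => Φ |g a| :=
    ae_of_all _ fun a => hΦ0.symm.trans_le <|
      hmono (mem_Ici.2 le_rfl) (mem_Ici.2 (abs_nonneg (g a))) (abs_nonneg (g a))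
  by_cases hΦi : Integrable (fun a => Φ |g a|) μ
  swap
  · rw [← lintegral_ofReal_ne_top_iff_integrable (f := fun a => Φ |g a|)
      (hcont.comp_aestronglyMeasurable hg.norm) hnonneg, not_not] at hΦi
    rw [hΦi]
    exact le_top
  calc ENNReal.ofReal (Φ |∫ a, g a ∂μ|) ≤ ENNReal.ofReal (Φ (∫ a, |g a| ∂μ)) :=
        ENNReal.ofReal_le_ofReal <| hmono (mem_Ici.2 (abs_nonneg _))
          (mem_Ici.2 (integral_nonneg fun a => abs_nonneg (g a))) (abs_integral_le_integral_abs)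
    _ ≤ ENNReal.ofReal (∫ a, Φ |g a| ∂μ) :=
        ENNReal.ofReal_le_ofReal <| hconv.map_integral_le hcont.continuousOn isClosed_Ici
          (ae_of_all _ fun a => abs_nonneg (g a)) hgi.abs hΦi
    _ = ∫⁻ a, ENNReal.ofReal (Φ |g a|) ∂μ := ofReal_integral_eq_lintegral_ofReal hΦi hnonneg

lemma lintegral_Ioi_mul_comp_mul {h : ℝ → ℝ≥0∞} (hh : Measurable h) {c : ℝ} (hc : 0 < c) :
    ∫⁻ t in Ioi 0, ENNReal.ofReal c * h (t * c) = ∫⁻ s in Ioi 0, h s := by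
  have hpre : (· * c) ⁻¹' Ioi (0:ℝ) = Ioi 0 := by
    ext t; simp [mul_pos_iff_of_pos_right hc]
  have hmap :=
    setLIntegral_map (μ := volume) (measurableSet_Ioi (a := 0)) hh (measurable_mul_const c)
  rw [hpre, Real.map_volume_mul_right hc.ne', Measure.restrict_smul, lintegral_smul_measure,
    abs_inv, abs_of_pos hc, smul_eq_mul] at hmap
  rw [lintegral_const_mul' _ _ ENNReal.ofReal_ne_top, ← hmap, ← mul_assoc,
    ← ENNReal.ofReal_mul hc.le, mul_inv_cancel₀ hc.ne', ENNReal.ofReal_one, one_mul]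

lemma lintegral_Ioi_lintegral_Ioo_mul_comp_mul {h : ℝ → ℝ≥0∞} (hh : Measurable h)
    {c : ℝ → ℝ} (hc : Measurable c) (hc0 : ∀ v ∈ Ioo 0 1, 0 < c v) :
    ∫⁻ t in Ioi 0, ∫⁻ v in Ioo 0 1, ENNReal.ofReal (c v) * h (t * c v) = ∫⁻ s in Ioi 0, h s := by
  rw [lintegral_lintegral_swap (by fun_prop),
    setLIntegral_congr_fun measurableSet_Ioo fun v hv => lintegral_Ioi_mul_comp_mul hh (hc0 v hv),
    setLIntegral_const, Real.volume_Ioo, sub_zero, ENNReal.ofReal_one, mul_one]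

noncomputable def dualCesaro (x : ℝ → ℝ) (t : ℝ) : ℝ := ∫ s in Ioi t, x s / s

section DualCesaro

variable {q : ℝ} {Φ : ℝ → ℝ} {x : ℝ → ℝ} {l : ℝ}

lemma ofReal_apply_dualCesaro_le (hq : 0 < q) (hΦ : IsOrliczFunction Φ)
    (hconc : ConcaveOn ℝ (Ici 0) (fun t : ℝ => Φ (t ^ (1/q)))) (hx : Measurable x) (hl : 0 < l)
    {t : ℝ} (ht : 0 < t) :
    ENNReal.ofReal (Φ (|dualCesaro x t| / (q * l))) ≤
      ∫⁻ v in Ioo 0 1, ENNReal.ofReal (v ^ (-q)) * ENNReal.ofReal (Φ (|x (t * v ^ (-q))| / l)) := by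
  obtain ⟨hcont, hconv, hmono, hΦ0, -⟩ := hΦ
  have : IsProbabilityMeasure (volume.restrict (Ioo (0:ℝ) 1)) := ⟨by simp⟩
  have hmean : |dualCesaro x t| / (q * l) = |∫ v in Ioo 0 1, x (t * v ^ (-q)) / v / l| := by
    rw [dualCesaro, integral_Ioi_div_eq_integral_Ioo x hq ht, integral_div, abs_mul, abs_div,
      abs_of_pos hq, abs_of_pos hl, mul_div_mul_left _ _ hq.ne']
  have hmeas : Measurable fun v => x (t * v ^ (-q)) / v / l := by fun_prop
  rw [hmean]
  refine (ofReal_apply_abs_integral_le_lintegral hcont hconv hmono hΦ0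
    hmeas.aestronglyMeasurable).trans (setLIntegral_mono (by fun_prop) fun v hv => ?_)
  have hu : 1 ≤ v ^ (-q) :=
    Real.one_le_rpow_of_pos_of_le_one_of_nonpos hv.1 hv.2.le (neg_nonpos.2 hq.le)
  have hroot : (v ^ (-q)) ^ (1/q) = v⁻¹ := by
    rw [← Real.rpow_mul hv.1.le, neg_mul, mul_one_div_cancel hq.ne', Real.rpow_neg_one]
  have key := apply_mul_rpow_one_div_le hq hconc hΦ0
    (div_nonneg (abs_nonneg (x (t * v ^ (-q)))) hl.le) hu
  rw [hroot] at key
  rw [← ENNReal.ofReal_mul (Real.rpow_nonneg hv.1.le _)]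
  refine ENNReal.ofReal_le_ofReal (le_of_eq_of_le ?_ key)
  rw [abs_div, abs_div, abs_of_pos hv.1, abs_of_pos hl, div_right_comm, div_eq_mul_inv]

lemma lintegral_apply_dualCesaro_le (hq : 0 < q) (hΦ : IsOrliczFunction Φ)
    (hconc : ConcaveOn ℝ (Ici 0) (fun t : ℝ => Φ (t ^ (1/q)))) (hx : Measurable x) (hl : 0 < l) :
    ∫⁻ t in Ioi 0, ENNReal.ofReal (Φ (|dualCesaro x t| / (q * l))) ≤
      ∫⁻ s in Ioi 0, ENNReal.ofReal (Φ (|x s| / l)) :=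
  calc ∫⁻ t in Ioi 0, ENNReal.ofReal (Φ (|dualCesaro x t| / (q * l)))
      ≤ ∫⁻ t in Ioi 0, ∫⁻ v in Ioo 0 1,
          ENNReal.ofReal (v ^ (-q)) * ENNReal.ofReal (Φ (|x (t * v ^ (-q))| / l)) :=
        setLIntegral_mono' measurableSet_Ioi fun t ht =>
          ofReal_apply_dualCesaro_le hq hΦ hconc hx hl ht
    _ = ∫⁻ s in Ioi 0, ENNReal.ofReal (Φ (|x s| / l)) :=
        lintegral_Ioi_lintegral_Ioo_mul_comp_mul (h := fun s => ENNReal.ofReal (Φ (|x s| / l)))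
          (c := fun v => v ^ (-q)) (by have := hΦ.1.measurable; fun_prop) (by fun_prop)
          fun v hv => Real.rpow_pos_of_pos hv.1 _

end DualCesaro

lemma orliczNorm_le_mul_of_lintegral_le {Φ : ℝ → ℝ} {x y : ℝ → ℝ} {c : ℝ} (hc : 0 < c)
    (h : ∀ l, 0 < l → ∫⁻ s in Ioi 0, ENNReal.ofReal (Φ (|y s| / (c * l))) ≤
      ∫⁻ s in Ioi 0, ENNReal.ofReal (Φ (|x s| / l))) :
    orliczNorm Φ y ≤ ENNReal.ofReal c * orliczNorm Φ x := by
  have hc' : ENNReal.ofReal c ≠ 0 := ENNReal.ofReal_ne_zero_iff.2 hc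
  conv_rhs => rw [orliczNorm, sInf_image, ENNReal.mul_iInf_of_ne hc' ENNReal.ofReal_ne_top]
  refine le_iInf fun l => ?_
  rw [ENNReal.mul_iInf_of_ne hc' ENNReal.ofReal_ne_top]
  refine le_iInf fun ⟨hl, hI⟩ => ?_
  rw [← ENNReal.ofReal_mul hc.le]
  exact sInf_le ⟨c * l, ⟨mul_pos hc hl, (h l hl).trans hI⟩, rfl⟩

/-- If `Φ` is a `q`-concave Orlicz function (`1 ≤ q < ∞`, i.e. `t ↦ Φ(t^{1/q})` is concave
on `[0,∞)`), then the dual Cesàro operator `(C*x)(t) = ∫_t^∞ x(s)/s ds` is bounded on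
`L_Φ(0,∞)`: there is a constant `C` (depending only on `Φ`) with `‖C*x‖_Φ ≤ C ‖x‖_Φ`. -/
theorem stmt_18 (q : ℝ) (hq : 1 ≤ q) (Φ : ℝ → ℝ) (hΦ : IsOrliczFunction Φ)
    (hconc : ConcaveOn ℝ (Ici 0) (fun t : ℝ => Φ (t ^ (1/q)))) :
    ∃ C : ℝ, 0 < C ∧ ∀ x : ℝ → ℝ, Measurable x →
      orliczNorm Φ (fun t => ∫ s in Ioi t, x s / s) ≤ ENNReal.ofReal C * orliczNorm Φ x := by
  have hq0 : 0 < q := one_pos.trans_le hq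
  exact ⟨q, hq0, fun x hx => orliczNorm_le_mul_of_lintegral_le hq0 fun l hl =>
    lintegral_apply_dualCesaro_le hq0 hΦ hconc hx hl⟩
end
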